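/- Conversely, every unit quaternion p satisfying p h p* · r = cos ρ factors as p = p₂* p₁ with p₁ ∈ C₁ = {q : q h q* = u} and p₂ ∈ C₂ = {q : q r q* = v}, for any prescribed u, v ∈ S² with u · v = cos ρ. Thus the torus {p ∈ S³ : d(p, C_{h,r}) = ρ/2} equals C₂* · C₁ = {p₂* p₁ : p₁ ∈ C₁, p₂ ∈ C₂}. -/
import Mathlib


open scoped Quaternion RealInnerProductSpace

open Quaternion

lemma pure_star (x : ℍ[ℝ]) (hx : x.re = 0) : star x = -x := by
  ext <;> simp [hx]

lemma pure_anticomm (x y : ℍ[ℝ]) (hx : x.re = 0) (hy : y.re = 0) :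
    x * y + y * x = ((-2 * ⟪x, y⟫ : ℝ) : ℍ[ℝ]) := by
  ext <;>
    simp [Quaternion.inner_def, Quaternion.re_mul, Quaternion.imI_mul,
      Quaternion.imJ_mul, Quaternion.imK_mul, hx, hy] <;> ring

lemma pure_sq (x : ℍ[ℝ]) (hx : x.re = 0) : x * x = ((-normSq x : ℝ) : ℍ[ℝ]) := by
  ext <;>
    simp [Quaternion.normSq_def', Quaternion.re_mul, Quaternion.imI_mul,
      Quaternion.imJ_mul, Quaternion.imK_mul, Quaternion.re_coe, Quaternion.imI_coe,
      Quaternion.imJ_coe, Quaternion.imK_coe, pow_two, hx] <;> ring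

lemma conj_re (q x : ℍ[ℝ]) : (q * x * star q).re = normSq q * x.re := by
  simp [Quaternion.normSq_def', Quaternion.re_mul, Quaternion.imI_mul,
    Quaternion.imJ_mul, Quaternion.imK_mul]
  ring

lemma pure_mul_re (x y : ℍ[ℝ]) (hy : y.re = 0) : (x * y).re = -⟪x, y⟫ := by
  rw [Quaternion.inner_def, pure_star y hy]
  simp

lemma conj_of_swap (s x y : ℍ[ℝ]) (hs : s ≠ 0) (hxy : s * x = y * s) :
    (‖s‖⁻¹ • s) * x * star (‖s‖⁻¹ • s) = y := by
  have hν : ‖s‖ ≠ 0 := norm_ne_zero_iff.2 hs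
  have h1 : s * x * star s = normSq s • y := by
    rw [hxy, mul_assoc, Quaternion.self_mul_star, Quaternion.mul_coe_eq_smul]
  rw [Quaternion.star_smul, smul_mul_assoc, smul_mul_assoc, mul_smul_comm, h1,
    smul_smul, smul_smul, Quaternion.normSq_eq_norm_mul_self]
  rw [show ‖s‖⁻¹ * ‖s‖⁻¹ * (‖s‖ * ‖s‖) = (‖s‖⁻¹ * ‖s‖) * (‖s‖⁻¹ * ‖s‖) by ring,
    inv_mul_cancel₀ hν, one_mul, one_smul]

lemma conj_mul' (a b x : ℍ[ℝ]) : (a * b) * x * star (a * b) = a * (b * x * star b) * star a := by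
  rw [star_mul]; simp only [mul_assoc]

lemma star_conj_pure (q x : ℍ[ℝ]) (hx : x.re = 0) :
    star (q * x * star q) = -(q * x * star q) := by
  apply pure_star
  rw [conj_re, hx, mul_zero]

lemma conj_inner (q x y : ℍ[ℝ]) (hq : ‖q‖ = 1) :
    ⟪q * x * star q, q * y * star q⟫ = ⟪x, y⟫ := by
  have hq1 : star q * q = 1 := by
    rw [Quaternion.star_mul_self, Quaternion.normSq_eq_norm_mul_self, hq]
    norm_num
  have hcanc : ∀ z : ℍ[ℝ], star q * (q * z) = z := by
    intro z; rw [← mul_assoc, hq1, one_mul]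
  rw [Quaternion.inner_def, Quaternion.inner_def]
  have : q * x * star q * star (q * y * star q) = q * (x * star y) * star q := by
    simp only [star_mul, star_star, mul_assoc, hcanc]
  rw [this, conj_re, Quaternion.normSq_eq_norm_mul_self, hq]
  ring

lemma key_swap (u v w : ℍ[ℝ]) (hu : u.re = 0) (hv : v.re = 0) (hw : w.re = 0)
    (hnorm : normSq u = normSq w) (huv : ⟪u, v⟫ = ⟪w, v⟫) :
    (((normSq (u * v - v * w) : ℝ) : ℍ[ℝ])
        + ((⟪w - u, u * v - v * w⟫ : ℝ) : ℍ[ℝ]) * v) * w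
      = u * (((normSq (u * v - v * w) : ℝ) : ℍ[ℝ])
        + ((⟪w - u, u * v - v * w⟫ : ℝ) : ℍ[ℝ]) * v) := by
  set A : ℍ[ℝ] := w - u with hAdef
  set C : ℍ[ℝ] := w + u with hCdef
  set B : ℍ[ℝ] := u * v - v * w with hBdef
  have hAre : A.re = 0 := by simp [hAdef, hw, hu]
  have hCre : C.re = 0 := by simp [hCdef, hw, hu]
  have hBre : B.re = 0 := by
    have h1 : (u * v).re = -⟪u, v⟫ := pure_mul_re u v hv
    have h2 : (v * w).re = -⟪v, w⟫ := pure_mul_re v w hw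
    simp [hBdef, h1, h2, huv, real_inner_comm v w]
  -- B = C * v + 2⟪w,v⟫
  have hCv : B = C * v + ((2 * ⟪w, v⟫ : ℝ) : ℍ[ℝ]) := by
    have h3 : v * w + w * v + ((2 * ⟪w, v⟫ : ℝ) : ℍ[ℝ]) = 0 := by
      rw [pure_anticomm v w hv hw, real_inner_comm v w, ← Quaternion.coe_add]
      norm_num
    apply sub_eq_zero.mp
    calc B - (C * v + ((2 * ⟪w, v⟫ : ℝ) : ℍ[ℝ]))
        = u * v - v * w - ((w * v + u * v) + ((2 * ⟪w, v⟫ : ℝ) : ℍ[ℝ])) := by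
          rw [hBdef, hCdef, add_mul]
      _ = -(v * w + w * v + ((2 * ⟪w, v⟫ : ℝ) : ℍ[ℝ])) := by abel
      _ = 0 := by rw [h3, neg_zero]
  -- A anticommutes with C
  have hAC : A * C = -(C * A) := by
    have hACi : ⟪A, C⟫ = 0 := by
      rw [hAdef, hCdef, inner_sub_left, inner_add_right, inner_add_right,
        real_inner_comm u w, Quaternion.inner_self, Quaternion.inner_self, hnorm]
      ring
    have h5 := pure_anticomm A C hAre hCre
    rw [hACi] at h5
    norm_num at h5
    exact eq_neg_of_add_eq_zero_left h5
  -- A anticommutes with v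
  have hAv : A * v = -(v * A) := by
    have hvAi : ⟪v, A⟫ = 0 := by
      rw [hAdef, inner_sub_right]
      linarith [real_inner_comm v w, real_inner_comm v u, huv]
    have h5 := pure_anticomm v A hv hAre
    rw [hvAi] at h5
    norm_num at h5
    exact eq_neg_of_add_eq_zero_right h5
  -- A commutes with B
  have hABBA : A * B = B * A := by
    have h6 : A * (C * v) = (C * v) * A := by
      rw [← mul_assoc, hAC, neg_mul, mul_assoc, hAv, mul_neg, neg_neg, mul_assoc]
    have h6c : A * ((2 * ⟪w, v⟫ : ℝ) : ℍ[ℝ]) = ((2 * ⟪w, v⟫ : ℝ) : ℍ[ℝ]) * A := by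
      rw [Quaternion.mul_coe_eq_smul, Quaternion.coe_mul_eq_smul]
    calc A * B = A * (C * v) + A * ((2 * ⟪w, v⟫ : ℝ) : ℍ[ℝ]) := by
          rw [hCv, mul_add (A) (C * v) (((2 * ⟪w, v⟫ : ℝ) : ℍ[ℝ]))]
      _ = (C * v) * A + ((2 * ⟪w, v⟫ : ℝ) : ℍ[ℝ]) * A := by rw [h6, h6c]
      _ = B * A := by rw [hCv, add_mul (C * v) (((2 * ⟪w, v⟫ : ℝ) : ℍ[ℝ])) A]
  have hBsq : B * B = ((-normSq B : ℝ) : ℍ[ℝ]) := pure_sq B hBre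
  -- coe of inner
  have hiAB : ((⟪A, B⟫ : ℝ) : ℍ[ℝ]) = -(A * B) := by
    have h5 := pure_anticomm A B hAre hBre
    rw [← hABBA] at h5
    have h7 : (2 : ℝ) • (A * B) = (2 : ℝ) • (-((⟪A, B⟫ : ℝ) : ℍ[ℝ])) := by
      rw [two_smul, two_smul, h5,
        show (-2 * ⟪A, B⟫ : ℝ) = -⟪A, B⟫ + -⟪A, B⟫ by ring,
        Quaternion.coe_add, Quaternion.coe_neg]
    have := smul_right_injective ℍ[ℝ] (two_ne_zero (α := ℝ)) h7
    rw [this, neg_neg]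
  -- the main identity
  have h1 : ((⟪A, B⟫ : ℝ) : ℍ[ℝ]) * B = ((normSq B : ℝ) : ℍ[ℝ]) * A := by
    rw [hiAB, neg_mul, mul_assoc, hBsq, Quaternion.mul_coe_eq_smul,
      Quaternion.coe_mul_eq_smul, neg_smul, neg_neg]
  rw [add_mul, mul_add, mul_assoc]
  have e1 : u * ((normSq B : ℝ) : ℍ[ℝ]) = ((normSq B : ℝ) : ℍ[ℝ]) * u :=
    (Quaternion.coe_commutes _ _).symm
  have e2 : u * (((⟪A, B⟫ : ℝ) : ℍ[ℝ]) * v) = ((⟪A, B⟫ : ℝ) : ℍ[ℝ]) * (u * v) := by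
    rw [← mul_assoc, ← Quaternion.coe_commutes, mul_assoc]
  rw [e1, e2]
  have h8 : ((⟪A, B⟫ : ℝ) : ℍ[ℝ]) * (u * v) - ((⟪A, B⟫ : ℝ) : ℍ[ℝ]) * (v * w)
      = ((normSq B : ℝ) : ℍ[ℝ]) * w - ((normSq B : ℝ) : ℍ[ℝ]) * u := by
    rw [← mul_sub, ← mul_sub, ← hBdef, ← hAdef]
    exact h1
  apply sub_eq_zero.mp
  calc ((normSq B : ℝ) : ℍ[ℝ]) * w + ((⟪A, B⟫ : ℝ) : ℍ[ℝ]) * (v * w)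
        - (((normSq B : ℝ) : ℍ[ℝ]) * u + ((⟪A, B⟫ : ℝ) : ℍ[ℝ]) * (u * v))
      = (((normSq B : ℝ) : ℍ[ℝ]) * w - ((normSq B : ℝ) : ℍ[ℝ]) * u)
        - (((⟪A, B⟫ : ℝ) : ℍ[ℝ]) * (u * v) - ((⟪A, B⟫ : ℝ) : ℍ[ℝ]) * (v * w)) := by abel
    _ = 0 := by rw [← h8, sub_self]

/-- Conversely, every unit quaternion `p` with `p h p* · r = cos ρ` factors as
`p = p₂* p₁` with `p₁ ∈ C₁ = {q : q h q* = u}`, `p₂ ∈ C₂ = {q : q r q* = v}`, for any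
prescribed `u, v ∈ S²` with `u · v = cos ρ`.  Thus the torus
`{p ∈ S³ : d(p, C_{h,r}) = ρ/2}` equals `C₂* · C₁`. -/
theorem torus_factorization_converse (h r u v : ℍ[ℝ]) (ρ : ℝ)
    (hh : h.re = 0) (hr : r.re = 0) (hu : u.re = 0) (hv : v.re = 0)
    (hhn : ‖h‖ = 1) (hrn : ‖r‖ = 1) (hun : ‖u‖ = 1) (hvn : ‖v‖ = 1)
    (hρ : ρ ∈ Set.Ioo 0 Real.pi) (huv : ⟪u, v⟫ = Real.cos ρ)
    (hu' : u ≠ -h) (hv' : v ≠ -r) :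
    ∀ p : ℍ[ℝ], ‖p‖ = 1 → ⟪p * h * star p, r⟫ = Real.cos ρ →
      ∃ p₁ p₂ : ℍ[ℝ], ‖p₁‖ = 1 ∧ ‖p₂‖ = 1 ∧
        p₁ * h * star p₁ = u ∧ p₂ * r * star p₂ = v ∧ p = star p₂ * p₁ := by
  intro p hp hwr
  have nsq : ∀ x : ℍ[ℝ], ‖x‖ = 1 → normSq x = 1 := fun x hx => by
    rw [Quaternion.normSq_eq_norm_mul_self, hx, one_mul]
  have hrn2 : normSq r = 1 := nsq r hrn
  have hvn2 : normSq v = 1 := nsq v hvn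
  have hun2 : normSq u = 1 := nsq u hun
  set w : ℍ[ℝ] := p * h * star p with hwdef
  have hwre : w.re = 0 := by rw [hwdef, conj_re, hh, mul_zero]
  have hwn : ‖w‖ = 1 := by
    rw [hwdef, norm_mul, norm_mul, norm_star, hp, hhn]; ring
  -- the quaternion rotating r to v
  have ht0 : (1 : ℍ[ℝ]) - v * r ≠ 0 := by
    intro h0
    apply hv'
    have h1 : v * r = 1 := by rwa [sub_eq_zero, eq_comm] at h0
    have h2 : v * (r * r) = r := by rw [← mul_assoc, h1, one_mul]
    rw [pure_sq r hr, hrn2, Quaternion.coe_neg, Quaternion.coe_one, mul_neg_one] at h2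
    exact neg_eq_iff_eq_neg.mp h2
  have htr : ((1 : ℍ[ℝ]) - v * r) * r = v * ((1 : ℍ[ℝ]) - v * r) := by
    have e1 : ((1 : ℍ[ℝ]) - v * r) * r = r + v := by
      rw [sub_mul, one_mul, mul_assoc, pure_sq r hr, hrn2, Quaternion.coe_neg,
        Quaternion.coe_one, mul_neg_one, sub_neg_eq_add]
    have e2 : v * ((1 : ℍ[ℝ]) - v * r) = v + r := by
      rw [mul_sub, mul_one, ← mul_assoc, pure_sq v hv, hvn2, Quaternion.coe_neg,
        Quaternion.coe_one, neg_one_mul, sub_neg_eq_add]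
    rw [e1, e2, add_comm]
  set q₀ : ℍ[ℝ] := ‖(1 : ℍ[ℝ]) - v * r‖⁻¹ • ((1 : ℍ[ℝ]) - v * r) with hq0def
  have hq0r : q₀ * r * star q₀ = v := conj_of_swap _ r v ht0 htr
  have hq0n : ‖q₀‖ = 1 := by
    rw [hq0def, norm_smul, norm_inv, norm_norm,
      inv_mul_cancel₀ (norm_ne_zero_iff.2 ht0)]
  set w' : ℍ[ℝ] := q₀ * w * star q₀ with hw'def
  have hw're : w'.re = 0 := by rw [hw'def, conj_re, hwre, mul_zero]
  have hw'n : ‖w'‖ = 1 := by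
    rw [hw'def, norm_mul, norm_mul, norm_star, hq0n, hwn]; ring
  have hw'n2 : normSq w' = 1 := nsq w' hw'n
  have hw'v : ⟪u, v⟫ = ⟪w', v⟫ := by
    have hci := conj_inner q₀ w r hq0n
    rw [← hw'def, hq0r] at hci
    rw [huv, ← hwr]
    exact hci.symm
  -- a quaternion commuting with v and intertwining w' and u
  obtain ⟨s, hs0, hsw, hsv⟩ :
      ∃ s : ℍ[ℝ], s ≠ 0 ∧ s * w' = u * s ∧ s * v = v * s := by
    by_cases hB : u * v - v * w' = 0
    · refine ⟨v, ?_, ?_, rfl⟩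
      · intro h0; rw [h0, norm_zero] at hvn; exact zero_ne_one hvn
      · rw [sub_eq_zero] at hB
        exact hB.symm
    · refine ⟨((normSq (u * v - v * w') : ℝ) : ℍ[ℝ])
          + ((⟪w' - u, u * v - v * w'⟫ : ℝ) : ℍ[ℝ]) * v, ?_, ?_, ?_⟩
      · intro h0
        have h2 := congrArg QuaternionAlgebra.re h0
        simp [Quaternion.re_mul, hv] at h2
        exact hB h2
      · exact key_swap u v w' hu hv hw're (by rw [hun2, hw'n2]) hw'v
      · rw [add_mul, mul_add, mul_assoc, ← Quaternion.coe_commutes,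
          ← mul_assoc v _ v, ← Quaternion.coe_commutes, mul_assoc]
  set sn : ℍ[ℝ] := ‖s‖⁻¹ • s with hsndef
  have hsnn : ‖sn‖ = 1 := by
    rw [hsndef, norm_smul, norm_inv, norm_norm,
      inv_mul_cancel₀ (norm_ne_zero_iff.2 hs0)]
  have hsnw : sn * w' * star sn = u := conj_of_swap s w' u hs0 hsw
  have hsnv : sn * v * star sn = v := conj_of_swap s v v hs0 hsv
  refine ⟨(sn * q₀) * p, sn * q₀, ?_, ?_, ?_, ?_, ?_⟩
  · rw [norm_mul, norm_mul, hsnn, hq0n, hp]; ring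
  · rw [norm_mul, hsnn, hq0n]; ring
  · rw [conj_mul', ← hwdef, conj_mul', ← hw'def]
    exact hsnw
  · rw [conj_mul', hq0r]
    exact hsnv
  · have hn2 : normSq (sn * q₀) = 1 := nsq _ (by rw [norm_mul, hsnn, hq0n]; ring)
    rw [← mul_assoc, Quaternion.star_mul_self, hn2, Quaternion.coe_one, one_mul]
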